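/- Let N* := P₀⁻¹ · P₁_KK and let ∇f denote the column vector of partial derivatives (∂f/∂p_x, ∂f/∂p_y, ∂f/∂x, ∂f/∂y). Then at every point with y ≠ 0: N*·∇H_KK = M₁₁·∇H_KK + M₁₂·∇K_KK and N*·∇K_KK = M₂₁·∇H_KK + M₂₂·∇K_KK, where M₁₁ = −2a·x − 3p_y²/y² + 3μ/y⁴, M₁₂ = −1/(12y²), M₂₂ = −2a·x − 3p_y²/y² − 3μ/y⁴, and M₂₁ = −(12/y²)(K_KK + 6μ·M₂₂). In particular the span of ∇H_KK and ∇K_KK is invariant under N*. -/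

import Mathlib

open Matrix

/-- Partial derivative `∂f/∂z^l` at `z`, coordinates `z = (p_x, p_y, x, y)`. -/
noncomputable def pd (l : Fin 4) (f : (Fin 4 → ℝ) → ℝ) (z : Fin 4 → ℝ) : ℝ :=
  fderiv ℝ f z (Pi.single l 1)

/-- Gradient column vector `(∂f/∂p_x, ∂f/∂p_y, ∂f/∂x, ∂f/∂y)`. -/
noncomputable def grad (f : (Fin 4 → ℝ) → ℝ) (z : Fin 4 → ℝ) : Fin 4 → ℝ :=
  fun i => pd i f z

/-- The canonical Poisson tensor `P₀` in the ordering `(p_x, p_y, x, y)`. -/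
def P0 : Matrix (Fin 4) (Fin 4) ℝ :=
  !![0, 0, -1, 0;
     0, 0, 0, -1;
     1, 0, 0, 0;
     0, 1, 0, 0]

/-- The deformed Poisson tensor `P₁` for the Kaup–Kupershmidt system. -/
noncomputable def P1KK (a ω : ℝ) (z : Fin 4 → ℝ) : Matrix (Fin 4) (Fin 4) ℝ :=
  let px := z 0; let py := z 1; let x := z 2; let y := z 3
  !![0, 6*py*(a*y^2 + 8*x*(a*x+ω))/y^2, -(4*a*x+3*ω), 2*(a*y^2 + 24*x*(a*x+ω))/y;
     -(6*py*(a*y^2 + 8*x*(a*x+ω))/y^2), 0, -(a*y) + 3*px*py/y^2, 8*a*x + 3*ω + 6*py^2/y^2;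
     4*a*x+3*ω, a*y - 3*px*py/y^2, 0, -(3*px)/y;
     -(2*(a*y^2 + 24*x*(a*x+ω))/y), -(8*a*x + 3*ω + 6*py^2/y^2), 3*px/y, 0]

/-- The adjoint recursion operator `N* = P₀⁻¹ · P₁_KK`. -/
noncomputable def NstarKK (a ω : ℝ) (z : Fin 4 → ℝ) : Matrix (Fin 4) (Fin 4) ℝ :=
  P0⁻¹ * P1KK a ω z

/-- The Kaup–Kupershmidt Hamiltonian, as a function of `z = (p_x, p_y, x, y)`. -/
noncomputable def HKK (a ω μ : ℝ) (z : Fin 4 → ℝ) : ℝ :=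
  let px := z 0; let py := z 1; let x := z 2; let y := z 3
  (1/2) * (px^2 + py^2) + 8*ω*x^2 + (ω/2)*y^2 + a*x*y^2 + (16*a/3)*x^3 + μ/(2*y^2)

/-- The Kaup–Kupershmidt quartic integral, as a function of `z = (p_x, p_y, x, y)`. -/
noncomputable def KKK (a ω μ : ℝ) (z : Fin 4 → ℝ) : ℝ :=
  let px := z 0; let py := z 1; let x := z 2; let y := z 3
  9*(ω*y^2 + py^2 + μ/y^2)^2 + 12*a*py*y^2*(3*x*py - y*px)
    - 2*a^2*y^4*(6*x^2 + y^2) + 12*a*x*(μ - ω*y^4) - 18*ω*μ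

/-! Both relations are identities between explicit rational functions of `(p_x, p_y, x, y)`:
the gradients of `H_KK` and `K_KK` are computed as derivatives along coordinate lines,
`P₀² = -1` gives `N* = -P₀ P₁_KK`, and the components are compared after clearing powers of `y`.
The span is then invariant because `N*` maps both of its generators into it. -/

theorem Matrix.mulVec_mem_span_of_forall_mem {R n : Type*} [CommSemiring R] [Fintype n]
    (A : Matrix n n R) {s : Set (n → R)} (hs : ∀ v ∈ s, A *ᵥ v ∈ Submodule.span R s)
    {w : n → R} (hw : w ∈ Submodule.span R s) : A *ᵥ w ∈ Submodule.span R s :=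
  (Submodule.span_le (p := (Submodule.span R s).comap A.mulVecLin)).mpr hs hw

theorem pd_eq_deriv {f : (Fin 4 → ℝ) → ℝ} {z : Fin 4 → ℝ} (hf : DifferentiableAt ℝ f z)
    (l : Fin 4) : pd l f z = deriv (fun t : ℝ => f (z + t • Pi.single l 1)) 0 := by
  rw [pd, ← hf.lineDeriv_eq_fderiv, lineDeriv]

theorem P0_mul_self : P0 * P0 = -1 := by
  ext i j
  fin_cases i <;> fin_cases j <;> simp [P0, Matrix.mul_apply, Fin.sum_univ_four]

theorem P0_inv : P0⁻¹ = -P0 :=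
  Matrix.inv_eq_left_inv (by rw [neg_mul, P0_mul_self, neg_neg])

theorem NstarKK_mulVec (a ω : ℝ) (z v : Fin 4 → ℝ) :
    NstarKK a ω z *ᵥ v = -(P0 *ᵥ (P1KK a ω z *ᵥ v)) := by
  rw [NstarKK, P0_inv, ← Matrix.mulVec_mulVec, Matrix.neg_mulVec]

section

variable (a ω μ : ℝ) {z : Fin 4 → ℝ}

theorem differentiableAt_HKK (hy : z 3 ≠ 0) : DifferentiableAt ℝ (HKK a ω μ) z := by
  unfold HKK
  fun_prop (disch := simp [hy])

theorem differentiableAt_KKK (hy : z 3 ≠ 0) : DifferentiableAt ℝ (KKK a ω μ) z := by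
  unfold KKK
  fun_prop (disch := simp [hy])

theorem grad_HKK (hy : z 3 ≠ 0) :
    grad (HKK a ω μ) z =
      ![z 0, z 1, 16*ω*z 2 + a*z 3^2 + 16*a*z 2^2, ω*z 3 + 2*a*z 2*z 3 - μ/z 3^3] := by
  funext l
  rw [grad, pd_eq_deriv (differentiableAt_HKK a ω μ hy)]
  unfold HKK
  fin_cases l <;>
    simp (disch := first | fun_prop (disch := simp [hy]) | simp [hy])
      [deriv_fun_add, deriv_fun_mul, deriv_fun_pow] <;>
    field_simp <;> ring

theorem grad_KKK (hy : z 3 ≠ 0) :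
    grad (KKK a ω μ) z =
      let px := z 0; let py := z 1; let x := z 2; let y := z 3
      let S := ω*y^2 + py^2 + μ/y^2
      ![-12*a*py*y^3,
        36*py*S + 12*a*y^2*(6*x*py - y*px),
        36*a*py^2*y^2 - 24*a^2*x*y^4 + 12*a*(μ - ω*y^4),
        36*S*(ω*y - μ/y^3) + 72*a*x*py^2*y - 36*a*px*py*y^2 - 48*a^2*x^2*y^3 - 12*a^2*y^5
          - 48*a*ω*x*y^3] := by
  funext l
  rw [grad, pd_eq_deriv (differentiableAt_KKK a ω μ hy)]
  unfold KKK
  fin_cases l <;>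
    simp (disch := first | fun_prop (disch := simp [hy]) | simp [hy])
      [deriv_fun_add, deriv_fun_sub, deriv_fun_mul, deriv_fun_pow] <;>
    field_simp <;> ring

theorem NstarKK_mulVec_grad_HKK (hy : z 3 ≠ 0) :
    NstarKK a ω z *ᵥ grad (HKK a ω μ) z
      = (-2*a*(z 2) - 3*(z 1)^2/(z 3)^2 + 3*μ/(z 3)^4) • grad (HKK a ω μ) z
        + (-1/(12*(z 3)^2)) • grad (KKK a ω μ) z := by
  rw [NstarKK_mulVec, grad_HKK a ω μ hy, grad_KKK a ω μ hy]
  funext i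
  fin_cases i <;>
    simp [P0, P1KK, dotProduct, Fin.sum_univ_four] <;>
    field_simp <;> ring

theorem NstarKK_mulVec_grad_KKK (hy : z 3 ≠ 0) :
    NstarKK a ω z *ᵥ grad (KKK a ω μ) z
      = (-(12/(z 3)^2) * (KKK a ω μ z
            + 6*μ*(-2*a*(z 2) - 3*(z 1)^2/(z 3)^2 - 3*μ/(z 3)^4))) • grad (HKK a ω μ) z
        + (-2*a*(z 2) - 3*(z 1)^2/(z 3)^2 - 3*μ/(z 3)^4) • grad (KKK a ω μ) z := by
  rw [NstarKK_mulVec, grad_HKK a ω μ hy, grad_KKK a ω μ hy]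
  funext i
  fin_cases i <;>
    simp [P0, P1KK, KKK, dotProduct, Fin.sum_univ_four] <;>
    field_simp <;> ring

end

theorem NstarKK_control_matrix (a ω μ : ℝ) (z : Fin 4 → ℝ) (hy : z 3 ≠ 0) :
    (NstarKK a ω z).mulVec (grad (HKK a ω μ) z)
        = (-2*a*(z 2) - 3*(z 1)^2/(z 3)^2 + 3*μ/(z 3)^4) • grad (HKK a ω μ) z
          + (-1/(12*(z 3)^2)) • grad (KKK a ω μ) z
    ∧ (NstarKK a ω z).mulVec (grad (KKK a ω μ) z)
        = (-(12/(z 3)^2) * (KKK a ω μ z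
              + 6*μ*(-2*a*(z 2) - 3*(z 1)^2/(z 3)^2 - 3*μ/(z 3)^4))) • grad (HKK a ω μ) z
          + (-2*a*(z 2) - 3*(z 1)^2/(z 3)^2 - 3*μ/(z 3)^4) • grad (KKK a ω μ) z
    ∧ ∀ v ∈ Submodule.span ℝ ({grad (HKK a ω μ) z, grad (KKK a ω μ) z} : Set (Fin 4 → ℝ)),
        (NstarKK a ω z).mulVec v
          ∈ Submodule.span ℝ ({grad (HKK a ω μ) z, grad (KKK a ω μ) z} : Set (Fin 4 → ℝ)) := by
  have hH := NstarKK_mulVec_grad_HKK a ω μ hy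
  have hK := NstarKK_mulVec_grad_KKK a ω μ hy
  refine ⟨hH, hK, fun v hv => (NstarKK a ω z).mulVec_mem_span_of_forall_mem ?_ hv⟩
  rintro w (rfl | rfl)
  · exact Submodule.mem_span_pair.mpr ⟨_, _, hH.symm⟩
  · exact Submodule.mem_span_pair.mpr ⟨_, _, hK.symm⟩
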